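/- Define f(v) = 3 − 2·log₂( max over c_z ∈ [−1, 1 − v/√2] of ( 2√(1 + c_z) + √(1 − c_z + v/√2) + √(1 − c_z − v/√2) ) ) for v ∈ (2, 2√2]. Then f is monotonically increasing in v. -/

import Mathlib

/-!
Write `t = v / √2`. For fixed `c_z`, the objective depends on `t` only through
`√(a + t) + √(a - t)` with `a = 1 - c_z`, which decreases in `t` because its square is
`2a + 2√(a² - t²)`. Raising `t` also shrinks the interval `[-1, 1 - t]`, so the maximum
decreases in `v`, and `f = 3 - 2 log₂ (max)` increases.
-/

/-- The function `f(v)` from the CHSH–min-entropy tradeoff. -/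
noncomputable def fCHSH (v : ℝ) : ℝ :=
  3 - 2 * Real.logb 2 (sSup ((fun cz : ℝ =>
    2 * Real.sqrt (1 + cz) + Real.sqrt (1 - cz + v / Real.sqrt 2) +
      Real.sqrt (1 - cz - v / Real.sqrt 2)) ''
    Set.Icc (-1) (1 - v / Real.sqrt 2)))

open Real Set

lemma sq_sqrt_add_add_sqrt_sub {a t : ℝ} (hp : 0 ≤ a + t) (hm : 0 ≤ a - t) :
    (√(a + t) + √(a - t)) ^ 2 = 2 * a + 2 * √(a ^ 2 - t ^ 2) := by
  rw [add_sq, sq_sqrt hp, sq_sqrt hm, mul_assoc, ← sqrt_mul hp]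
  ring_nf

lemma antitoneOn_sqrt_add_add_sqrt_sub (a : ℝ) :
    AntitoneOn (fun t => √(a + t) + √(a - t)) (Icc 0 a) := by
  rintro t₁ ⟨ht₁, ht₁a⟩ t₂ ⟨ht₂, ht₂a⟩ h
  rw [← sq_le_sq₀ (by positivity) (by positivity),
    sq_sqrt_add_add_sqrt_sub (by linarith) (by linarith),
    sq_sqrt_add_add_sqrt_sub (by linarith) (by linarith)]
  have : √(a ^ 2 - t₂ ^ 2) ≤ √(a ^ 2 - t₁ ^ 2) := sqrt_le_sqrt (by nlinarith)
  linarith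

lemma csSup_image_le_csSup_image {α β : Type*} [ConditionallyCompleteLattice β]
    {f g : α → β} {s t : Set α} (hs : s.Nonempty) (hst : s ⊆ t)
    (hfg : ∀ x ∈ s, f x ≤ g x) (hg : BddAbove (g '' t)) :
    sSup (f '' s) ≤ sSup (g '' t) :=
  csSup_le (hs.image f) <| forall_mem_image.2 fun x hx =>
    (hfg x hx).trans (le_csSup hg (mem_image_of_mem g (hst hx)))

noncomputable def chshObjective (t c : ℝ) : ℝ :=
  2 * √(1 + c) + √(1 - c + t) + √(1 - c - t)

lemma fCHSH_eq (v : ℝ) :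
    fCHSH v = 3 - 2 * logb 2 (sSup (chshObjective (v / √2) '' Icc (-1) (1 - v / √2))) :=
  rfl

lemma chshObjective_le_of_le {t₁ t₂ c : ℝ} (ht₁ : 0 ≤ t₁) (ht : t₁ ≤ t₂) (hc : c ≤ 1 - t₂) :
    chshObjective t₂ c ≤ chshObjective t₁ c := by
  have := antitoneOn_sqrt_add_add_sqrt_sub (1 - c) ⟨ht₁, by linarith⟩
    ⟨ht₁.trans ht, by linarith⟩ ht
  simp only [chshObjective]
  linarith

lemma bddAbove_chshObjective_image (t : ℝ) :
    BddAbove (chshObjective t '' Icc (-1) (1 - t)) :=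
  isCompact_Icc.bddAbove_image (by unfold chshObjective; fun_prop)

lemma sSup_chshObjective_pos {t : ℝ} (ht₀ : 0 ≤ t) (ht : t ≤ 2) :
    0 < sSup (chshObjective t '' Icc (-1) (1 - t)) := by
  have hmem : (-1 : ℝ) ∈ Icc (-1) (1 - t) := ⟨le_rfl, by linarith⟩
  have hpos : 0 < chshObjective t (-1) := by
    have : 0 < √(1 - -1 + t) := sqrt_pos.2 (by linarith)
    unfold chshObjective
    positivity
  exact hpos.trans_le (le_csSup (bddAbove_chshObjective_image t) (mem_image_of_mem _ hmem))

lemma sSup_chshObjective_le {t₁ t₂ : ℝ} (ht₁ : 0 ≤ t₁) (ht : t₁ ≤ t₂) (ht₂ : t₂ ≤ 2) :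
    sSup (chshObjective t₂ '' Icc (-1) (1 - t₂)) ≤
      sSup (chshObjective t₁ '' Icc (-1) (1 - t₁)) :=
  csSup_image_le_csSup_image ⟨-1, le_rfl, by linarith⟩ (Icc_subset_Icc_right (by linarith))
    (fun _ hc => chshObjective_le_of_le ht₁ ht hc.2) (bddAbove_chshObjective_image t₁)

theorem stmt_9 (v₁ v₂ : ℝ) (h1 : 2 < v₁) (h12 : v₁ ≤ v₂)
    (h2 : v₂ ≤ 2 * Real.sqrt 2) : fCHSH v₁ ≤ fCHSH v₂ := by
  have hsqrt2 : 0 < √2 := by positivity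
  have ht₁ : 0 ≤ v₁ / √2 := div_nonneg (by linarith) hsqrt2.le
  have ht : v₁ / √2 ≤ v₂ / √2 := div_le_div_of_nonneg_right h12 hsqrt2.le
  have ht₂ : v₂ / √2 ≤ 2 := (div_le_iff₀ hsqrt2).2 h2
  have hlog := logb_le_logb_of_le one_lt_two (sSup_chshObjective_pos (ht₁.trans ht) ht₂)
    (sSup_chshObjective_le ht₁ ht ht₂)
  rw [fCHSH_eq, fCHSH_eq]
  linarith
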